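/- For the q = 3 model with J₀ = J and J₁ = J₂ = 0, the discriminant of the quadratic for the nonzero eigenvalues of the transfer matrix with rows (x, y, y²), (y, y², y³), (y², y³, y⁴) evaluated at y = 1 equals Δ = 12 + x² - 4x, and the per capita investment is l(β) = [3 + (12 - 3x)/√(12 - 4x + x²)] / (x + 2 + √(12 - 4x + x²)) with x = e^{-βJ}. In particular for J > 0, l(β) → (3 + √12)/(2 + √12) as β → ∞. -/

import Mathlib

/-!
At `y = 1` the discriminant is `(x - 2)² + 8 > 0`, so `λ = ½[x + y² + y⁴ + √Δ]` is differentiable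
there, and the chain rule gives `∂λ/∂y (1) = 3 + (12 - 3x)/√Δ`. The factor `∂y/∂D = -β/2` cancels
the `β` in `1/(βλ)`, leaving the closed form. That closed form is continuous in `x` on all of `ℝ`,
so its limit as `β → ∞` is its value at `x = e^{-βJ} → 0`.
-/

open Real Filter

/-- The discriminant of the quadratic for the nonzero eigenvalues of the `q = 3`
transfer matrix with `J₀ = J`, `J₁ = J₂ = 0`, in variables `x = e^{-βJ}`,
`y = e^{-βD/2}`. -/
noncomputable def q3DeltaCase3 (x y : ℝ) : ℝ :=
  x ^ 2 + 4 * y ^ 2 + 5 * y ^ 4 + 2 * y ^ 6 + y ^ 8 - 2 * x * y ^ 2 - 2 * x * y ^ 4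

/-- The largest eigenvalue `λ = ½[x + y² + y⁴ + √Δ]`. -/
noncomputable def q3LamCase3 (x y : ℝ) : ℝ :=
  (1 / 2) * (x + y ^ 2 + y ^ 4 + Real.sqrt (q3DeltaCase3 x y))

/-- The closed-form per capita investment for this case, as a function of `x`. -/
noncomputable def q3InvCase3 (x : ℝ) : ℝ :=
  (3 + (12 - 3 * x) / Real.sqrt (12 - 4 * x + x ^ 2)) /
    (x + 2 + Real.sqrt (12 - 4 * x + x ^ 2))

lemma q3DeltaCase3_one (x : ℝ) : q3DeltaCase3 x 1 = 12 - 4 * x + x ^ 2 := by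
  simp only [q3DeltaCase3]
  ring

lemma q3Disc_pos (x : ℝ) : 0 < 12 - 4 * x + x ^ 2 := by
  nlinarith [sq_nonneg (x - 2)]

lemma q3LamCase3_one (x : ℝ) :
    q3LamCase3 x 1 = (1 / 2) * (x + 2 + √(12 - 4 * x + x ^ 2)) := by
  rw [q3LamCase3, q3DeltaCase3_one]
  ring

/-- `√((x - 2)² + 8) > |x - 2| ≥ -(x + 2)` -/
lemma q3Lam_denom_pos (x : ℝ) : 0 < x + 2 + √(12 - 4 * x + x ^ 2) := by
  have habs : |x - 2| ≤ √(12 - 4 * x + x ^ 2) := Real.abs_le_sqrt (by nlinarith)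
  linarith [neg_abs_le (x - 2)]

lemma hasDerivAt_q3DeltaCase3 (x y : ℝ) :
    HasDerivAt (q3DeltaCase3 x)
      (8 * y + 20 * y ^ 3 + 12 * y ^ 5 + 8 * y ^ 7 - 4 * x * y - 8 * x * y ^ 3) y := by
  have h := (((((((hasDerivAt_pow 2 y).const_mul 4).const_add (x ^ 2)).add
    ((hasDerivAt_pow 4 y).const_mul 5)).add ((hasDerivAt_pow 6 y).const_mul 2)).add
    (hasDerivAt_pow 8 y)).sub ((hasDerivAt_pow 2 y).const_mul (2 * x))).sub
    ((hasDerivAt_pow 4 y).const_mul (2 * x))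
  exact h.congr_deriv (by norm_num; ring)

lemma hasDerivAt_q3LamCase3 {x y : ℝ} (hΔ : q3DeltaCase3 x y ≠ 0) :
    HasDerivAt (q3LamCase3 x)
      ((1 / 2) * (2 * y + 4 * y ^ 3 +
        (8 * y + 20 * y ^ 3 + 12 * y ^ 5 + 8 * y ^ 7 - 4 * x * y - 8 * x * y ^ 3) /
          (2 * √(q3DeltaCase3 x y)))) y := by
  have h := ((((hasDerivAt_const y x).add (hasDerivAt_pow 2 y)).add (hasDerivAt_pow 4 y)).add
    ((hasDerivAt_q3DeltaCase3 x y).sqrt hΔ)).const_mul (1 / 2)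
  exact h.congr_deriv (by norm_num)

lemma deriv_q3LamCase3_one (x : ℝ) :
    deriv (q3LamCase3 x) 1 = 3 + (12 - 3 * x) / √(12 - 4 * x + x ^ 2) := by
  have hΔ : q3DeltaCase3 x 1 ≠ 0 := by
    rw [q3DeltaCase3_one]
    exact (q3Disc_pos x).ne'
  have hsqrt : √(12 - 4 * x + x ^ 2) ≠ 0 := (Real.sqrt_pos.2 (q3Disc_pos x)).ne'
  rw [(hasDerivAt_q3LamCase3 hΔ).deriv, q3DeltaCase3_one]
  field_simp
  ring

lemma q3_investment_eq {β : ℝ} (hβ : β ≠ 0) (x : ℝ) :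
    -(1 / (β * q3LamCase3 x 1)) * (deriv (q3LamCase3 x) 1 * (-(β / 2))) = q3InvCase3 x := by
  have hden := (q3Lam_denom_pos x).ne'
  rw [deriv_q3LamCase3_one, q3LamCase3_one, q3InvCase3]
  field_simp

lemma continuous_q3InvCase3 : Continuous q3InvCase3 := by
  have hsqrt : Continuous fun x : ℝ => √(12 - 4 * x + x ^ 2) := by fun_prop
  have hlin : Continuous fun x : ℝ => 12 - 3 * x := by fun_prop
  exact (continuous_const.add (hlin.div hsqrt fun x => (Real.sqrt_pos.2 (q3Disc_pos x)).ne')).div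
    ((continuous_id.add continuous_const).add hsqrt) fun x => (q3Lam_denom_pos x).ne'

lemma q3InvCase3_zero : q3InvCase3 0 = (3 + √12) / (2 + √12) := by
  norm_num [q3InvCase3, Real.div_sqrt]

lemma tendsto_exp_neg_mul_atTop {J : ℝ} (hJ : 0 < J) :
    Tendsto (fun b : ℝ => exp (-b * J)) atTop (nhds 0) := by
  simp only [neg_mul]
  exact Real.tendsto_exp_neg_atTop_nhds_zero.comp (tendsto_id.atTop_mul_const hJ)

/-- For the `q = 3` model with `J₀ = J`, `J₁ = J₂ = 0`: the discriminant at `y = 1`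
equals `12 + x² - 4x`, the per capita investment
`l(β) = -(1/(βλ))·(∂λ/∂y)·(∂y/∂D)|_{D=0}` equals the stated closed form with
`x = e^{-βJ}`, and for `J > 0` it tends to `(3 + √12)/(2 + √12)` as `β → ∞`. -/
theorem q3_case3_investment (β J : ℝ) (hβ : β ≠ 0) :
    (∀ x : ℝ, q3DeltaCase3 x 1 = 12 + x ^ 2 - 4 * x) ∧
    (-(1 / (β * q3LamCase3 (exp (-β * J)) 1)) *
        (deriv (q3LamCase3 (exp (-β * J))) 1 * (-(β / 2)))
      = q3InvCase3 (exp (-β * J))) ∧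
    (0 < J → Tendsto (fun b : ℝ => q3InvCase3 (exp (-b * J))) atTop
      (nhds ((3 + Real.sqrt 12) / (2 + Real.sqrt 12)))) := by
  refine ⟨fun x => by rw [q3DeltaCase3_one]; ring, q3_investment_eq hβ _, fun hJ => ?_⟩
  rw [← q3InvCase3_zero]
  exact (continuous_q3InvCase3.tendsto 0).comp (tendsto_exp_neg_mul_atTop hJ)
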